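/- Suppose all vote shares p_d are distinct, a is not an integer, and ⌈a⌉ ∈ {1,…,N−1}. Then for every w ≥ 0, the seat total S = ⌈a⌉ minimizes Φ_p(·; w) over {0,…,N} if and only if w ≥ 2·p_(⌈a⌉+1) − 1 and (2⌈a⌉ − 1 − 2a)·w ≤ 2·p_(⌈a⌉) − 1. -/

import Mathlib

open Finset

/-- Sum of the `S` largest entries of the vote-share profile `p`. -/
noncomputable def topSum {N : ℕ} (p : Fin N → ℝ) (S : ℕ) : ℝ :=
  ∑ i : Fin N, if (i : ℕ) < S then p (Tuple.sort p i.rev) else 0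

/-- `ordStat p i` is the `(i+1)`-th largest entry of `p` (so `ordStat p ⟨S-1,_⟩` is `p_(S)`). -/
noncomputable def ordStat {N : ℕ} (p : Fin N → ℝ) (i : Fin N) : ℝ :=
  p (Tuple.sort p i.rev)

/-- Total misrepresentation `Φ_p(S; w) = S + a − 2·Γ_p(S) + w·|a − S|` of a top-`S`
allocation at weight `w`, where `a = ∑ d, p d`. -/
noncomputable def PhiS {N : ℕ} (p : Fin N → ℝ) (S : ℕ) (w : ℝ) : ℝ :=
  (S : ℝ) + (∑ d, p d) - 2 * topSum p S + w * |(∑ d, p d) - (S : ℝ)|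

/-! On a discretely convex function of the seat total a local minimum is global. The increment
`Φ(S+1) − Φ(S) = 1 − 2·p_(S+1) + w·(|a − S − 1| − |a − S|)` is nondecreasing in `S` because the
order statistics decrease and `|a − ·|` is convex, so `⌈a⌉` is a minimizer exactly when `Φ` does
not decrease from `⌈a⌉` to `⌈a⌉ + 1` and does not increase from `⌈a⌉ − 1` to `⌈a⌉`. Since
`⌈a⌉ − 1 < a ≤ ⌈a⌉`, these two increments are the two conditions of the theorem. -/

theorem forall_le_iff_of_monotone_increments {f : ℕ → ℝ} {N m : ℕ} (hm : 0 < m) (hmN : m < N)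
    (hinc : ∀ S T, S ≤ T → T < N → f (S + 1) - f S ≤ f (T + 1) - f T) :
    (∀ S ≤ N, f m ≤ f S) ↔ f m ≤ f (m - 1) ∧ f m ≤ f (m + 1) := by
  refine ⟨fun h => ⟨h _ (by omega), h _ hmN⟩, fun ⟨hl, hr⟩ S hS => ?_⟩
  rcases le_total m S with hmS | hSm
  · have hmono : MonotoneOn f (Set.Icc m N) :=
      monotoneOn_of_le_succ Set.ordConnected_Icc fun T _ hT hT' => by
        simp only [Order.succ_eq_add_one, Set.mem_Icc] at hT hT' ⊢
        linarith [hinc m T hT.1 (by omega)]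
    exact hmono ⟨le_rfl, hmN.le⟩ ⟨hmS, hS⟩ hmS
  · have hanti : AntitoneOn f (Set.Iic m) :=
      antitoneOn_of_succ_le Set.ordConnected_Iic fun T _ _ hT' => by
        simp only [Order.succ_eq_add_one, Set.mem_Iic] at hT' ⊢
        have := hinc T (m - 1) (by omega) (by omega)
        rw [Nat.sub_add_cancel hm] at this
        linarith
    exact hanti hSm Set.self_mem_Iic hSm

theorem ordStat_antitone {N : ℕ} (p : Fin N → ℝ) : Antitone (ordStat p) :=
  fun _ _ hij => Tuple.monotone_sort p (Fin.rev_le_rev.mpr hij)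

theorem topSum_succ {N : ℕ} (p : Fin N → ℝ) (S : ℕ) (hS : S < N) :
    topSum p (S + 1) = topSum p S + ordStat p ⟨S, hS⟩ := by
  have hsplit : ∀ i : Fin N, (if (i : ℕ) < S + 1 then ordStat p i else 0) =
      (if (i : ℕ) < S then ordStat p i else 0) + if i = ⟨S, hS⟩ then ordStat p i else 0 := by
    intro i
    split_ifs <;> simp_all [Fin.ext_iff] <;> omega
  change (∑ i : Fin N, if (i : ℕ) < S + 1 then ordStat p i else 0) =
    (∑ i : Fin N, if (i : ℕ) < S then ordStat p i else 0) + ordStat p ⟨S, hS⟩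
  simp only [hsplit, sum_add_distrib, sum_ite_eq', mem_univ, if_true]

theorem PhiS_succ_sub {N : ℕ} (p : Fin N → ℝ) (w : ℝ) (S : ℕ) (hS : S < N) :
    PhiS p (S + 1) w - PhiS p S w =
      1 - 2 * ordStat p ⟨S, hS⟩ + w * (|∑ d, p d - (S + 1)| - |∑ d, p d - S|) := by
  simp only [PhiS, topSum_succ p S hS]
  push_cast
  ring

theorem monotone_abs_sub_add_one_sub_abs (a : ℝ) :
    Monotone fun x : ℝ => |a - (x + 1)| - |a - x| := by
  intro x y hxy
  dsimp only
  rcases abs_cases (a - (x + 1)) with h1 | h1 <;> rcases abs_cases (a - x) with h2 | h2 <;>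
    rcases abs_cases (a - (y + 1)) with h3 | h3 <;> rcases abs_cases (a - y) with h4 | h4 <;>
    linarith

theorem PhiS_increment_mono {N : ℕ} (p : Fin N → ℝ) {w : ℝ} (hw : 0 ≤ w) (S T : ℕ)
    (hST : S ≤ T) (hT : T < N) :
    PhiS p (S + 1) w - PhiS p S w ≤ PhiS p (T + 1) w - PhiS p T w := by
  rw [PhiS_succ_sub p w S (by omega), PhiS_succ_sub p w T hT]
  have hord : ordStat p ⟨T, hT⟩ ≤ ordStat p ⟨S, by omega⟩ := ordStat_antitone p hST
  have hslope := monotone_abs_sub_add_one_sub_abs (∑ d, p d) (Nat.cast_le.mpr hST : (S : ℝ) ≤ T)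
  linarith [mul_le_mul_of_nonneg_left hslope hw]

/-- near-proportionality weight set for `S = ⌈a⌉`.
Suppose all vote shares are distinct, `a` is not an integer, and `⌈a⌉ ∈ {1,…,N−1}`.
Then for every `w ≥ 0`, the seat total `S = ⌈a⌉` minimizes `Φ_p(·; w)` over `{0,…,N}`
if and only if `w ≥ 2·p_(⌈a⌉+1) − 1` and `(2⌈a⌉ − 1 − 2a)·w ≤ 2·p_(⌈a⌉) − 1`. -/
theorem stmt6 (N : ℕ) (p : Fin N → ℝ)
    (a : ℝ) (ha : a = ∑ d, p d)
    (hcl1 : 1 ≤ ⌈a⌉₊) (hcl2 : ⌈a⌉₊ ≤ N - 1)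
    (w : ℝ) (hw : 0 ≤ w) :
    (∀ S' ≤ N, PhiS p ⌈a⌉₊ w ≤ PhiS p S' w) ↔
      (2 * ordStat p ⟨⌈a⌉₊, by omega⟩ - 1 ≤ w ∧
       (2 * (⌈a⌉₊ : ℝ) - 1 - 2 * a) * w ≤ 2 * ordStat p ⟨⌈a⌉₊ - 1, by omega⟩ - 1) := by
  have ha_pos : 0 < a := Nat.one_le_ceil_iff.mp hcl1
  have ha_le : a ≤ ⌈a⌉₊ := Nat.le_ceil a
  have ha_gt : (⌈a⌉₊ : ℝ) - 1 < a := by linarith [Nat.ceil_lt_add_one ha_pos.le]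
  refine (forall_le_iff_of_monotone_increments (f := fun S => PhiS p S w) hcl1 (by omega)
    (PhiS_increment_mono p hw)).trans ?_
  have hup := PhiS_succ_sub p w ⌈a⌉₊ (by omega)
  have hdown := PhiS_succ_sub p w (⌈a⌉₊ - 1) (by omega)
  rw [← ha] at hup hdown
  rw [Nat.sub_add_cancel hcl1, Nat.cast_sub hcl1, Nat.cast_one, sub_add_cancel] at hdown
  rw [abs_of_nonpos (by linarith), abs_of_nonpos (by linarith)] at hup
  rw [abs_of_nonpos (by linarith), abs_of_nonneg (by linarith)] at hdown
  constructor <;> rintro ⟨h1, h2⟩ <;> constructor <;> linarith
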